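/- arXiv:2404.07128 — 2 statements merged into one kernel-verified Lean document; each statement's English description precedes it below -/
import Mathlib

section
/- Let f_0: ℝ^k → ℝ be a ReLU feedforward network of class F(L,r) with weight vector v_0, and let f_1,...,f_k: ℝ^d → ℝ be ReLU feedforward networks of class F(L̄,r̄) with weight vectors v_1,...,v_k; denote by v̄ the vector collecting v_1,...,v_k. Then the composed network f = f_0(f_1,...,f_k) has L+L̄ hidden layers and at most max{k·r̄, r} neurons per layer, and its weight vector v satisfies: (a) ‖v‖_∞ ≤ max{‖v_0‖_∞, ‖v̄‖_∞, ‖(v_0)^{(0)}‖_∞·(k·‖(v̄)^{(L̄)}‖_∞ + 1)}; (b) if the output-layer offsets (v_j)^{(L̄)}_{1,0} = 0 for all j ∈ {1,...,k}, then ‖v‖_∞ ≤ max{‖v_0‖_∞, ‖v̄‖_∞, ‖(v_0)^{(0)}_{i,j>0}‖_∞·‖(v̄)^{(L̄)}_{1,j>0}‖_∞}; (c) if additionally ‖(v_0)^{(0)}_{i,j>0}‖_∞ ≤ 1 or ‖(v̄)^{(L̄)}_{i,j>0}‖_∞ ≤ 1, then ‖v‖_∞ ≤ max{‖v_0‖_∞,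 ‖v̄‖_∞}. -/
open Finset

noncomputable section

/-- Output `g_i^{(l)}(x)` of neuron `i` in layer `l` of a feedforward ReLU network with
input dimension `d` (coordinates `x 1, …, x d`), `r` neurons per hidden layer and
weights `v l i j = v_{i,j}^{(l)}`. -/
def fnnNeuron (d r : ℕ) (v : ℕ → ℕ → ℕ → ℝ) (x : ℕ → ℝ) : ℕ → ℕ → ℝ
  | 0, j => x j
  | (l + 1), i =>
      max 0 (v l i 0 +
        ∑ j ∈ Finset.Icc 1 (if l = 0 then d else r), v l i j * fnnNeuron d r v x l j)

/-- Output of the feedforward ReLU network with `L` hidden layers of `r` neurons each,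
input dimension `d` and weight vector `v` (the class `F(L,r)`). -/
def fnnEval (d r L : ℕ) (v : ℕ → ℕ → ℕ → ℝ) (x : ℕ → ℝ) : ℝ :=
  v L 1 0 + ∑ i ∈ Finset.Icc 1 r, v L 1 i * fnnNeuron d r v x L i

/-- The indices `(l, i, j)` of the weights `v_{i,j}^{(l)}` actually used by a network
in `F(L,r)` with input dimension `d`. -/
def RelW (d r L : ℕ) (l i j : ℕ) : Prop :=
  (l < L ∧ 1 ≤ i ∧ i ≤ r ∧ j ≤ (if l = 0 then d else r)) ∨
    (l = L ∧ i = 1 ∧ j ≤ (if L = 0 then d else r))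

/-- Supremum of `|v l i j|` over all indices satisfying the predicate `Pred`
(e.g. the supremum norm of (part of) a weight vector). -/
def wsup (Pred : ℕ → ℕ → ℕ → Prop) (v : ℕ → ℕ → ℕ → ℝ) : ℝ :=
  sSup {y : ℝ | ∃ l i j, Pred l i j ∧ y = |v l i j|}


/-- Supremum of `|vf jj l i m|` over `jj ∈ {1,…,k}` and indices `(l,i,m)` satisfying
`Pred` (supremum norm of (parts of) a family of weight vectors). -/
def wsupFam (k : ℕ) (Pred : ℕ → ℕ → ℕ → Prop) (vf : ℕ → ℕ → ℕ → ℕ → ℝ) : ℝ :=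
  sSup {y : ℝ | ∃ jj l i m, 1 ≤ jj ∧ jj ≤ k ∧ Pred l i m ∧ y = |vf jj l i m|}


-- block/index arithmetic
lemma blkidx {rb : ℕ} (hrb : 0 < rb) {jj m : ℕ} (hm1 : 1 ≤ m) (hm2 : m ≤ rb) :
    ((jj - 1) * rb + m - 1) / rb = jj - 1 ∧ ((jj - 1) * rb + m - 1) % rb = m - 1 := by
  have h : (jj - 1) * rb + m - 1 = (m - 1) + (jj - 1) * rb := by omega
  rw [h, Nat.add_mul_div_right _ _ hrb, Nat.add_mul_mod_self_right,
    Nat.div_eq_of_lt (by omega), Nat.mod_eq_of_lt (by omega)]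
  omega

lemma blk_mem {rb k j : ℕ} (hrb : 0 < rb) (hj1 : 1 ≤ j) (hj2 : j ≤ k * rb) :
    1 ≤ (j - 1) / rb + 1 ∧ (j - 1) / rb + 1 ≤ k ∧ 1 ≤ (j - 1) % rb + 1 ∧ (j - 1) % rb + 1 ≤ rb
      ∧ ((j - 1) / rb + 1 - 1) * rb + ((j - 1) % rb + 1) = j := by
  have h1 : (j - 1) / rb < k := (Nat.div_lt_iff_lt_mul hrb).2 (by omega)
  have h2 : (j - 1) % rb < rb := Nat.mod_lt _ hrb
  have h3 : rb * ((j - 1) / rb) + (j - 1) % rb = j - 1 := Nat.div_add_mod _ _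
  rw [Nat.add_sub_cancel]
  generalize hq : (j - 1) / rb = q at *
  generalize hs : (j - 1) % rb = s at *
  have h4 : q * rb = rb * q := Nat.mul_comm _ _
  refine ⟨by omega, by omega, by omega, by omega, by omega⟩

-- sum over blocks
lemma sum_blocks (rb : ℕ) (f : ℕ → ℝ) : ∀ k : ℕ,
    ∑ j ∈ Icc 1 (k * rb), f j = ∑ jj ∈ Icc 1 k, ∑ m ∈ Icc 1 rb, f ((jj - 1) * rb + m) := by
  intro k
  induction k with
  | zero => simp
  | succ k ih =>
      have h1 : Icc 1 ((k+1)*rb) = Ioc 0 ((k+1)*rb) := Finset.Icc_add_one_left_eq_Ioc 0 _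
      have h2 : Icc 1 (k*rb) = Ioc 0 (k*rb) := Finset.Icc_add_one_left_eq_Ioc 0 _
      rw [Finset.sum_Icc_succ_top (by omega), ← ih, h1, h2,
        ← Finset.sum_Ioc_consecutive f (Nat.zero_le (k*rb)) (by nlinarith [Nat.le_refl 1] : k*rb ≤ (k+1)*rb)]
      congr 1
      have h3 : Ioc (k*rb) ((k+1)*rb) = Ioc (k*rb + 0) (k*rb + rb) := by congr 1; ring
      rw [h3, ← Finset.map_add_left_Ioc 0 rb (k*rb), Finset.sum_map]
      have : Ioc 0 rb = Icc 1 rb := (Finset.Icc_add_one_left_eq_Ioc 0 rb).symm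
      rw [this]
      apply Finset.sum_congr rfl
      intro m _
      congr 1

-- boundedness of wsup sets
lemma wsup_bdd (v : ℕ → ℕ → ℕ → ℝ) (P : ℕ → ℕ → ℕ → Prop) (N : ℕ)
    (h : ∀ l i j, P l i j → l ≤ N ∧ i ≤ N ∧ j ≤ N) :
    BddAbove {y : ℝ | ∃ l i j, P l i j ∧ y = |v l i j|} := by
  apply BddAbove.mono (t := ↑((range (N+1) ×ˢ range (N+1) ×ˢ range (N+1)).image
    (fun p : ℕ × ℕ × ℕ => |v p.1 p.2.1 p.2.2|)))
  · rintro y ⟨l, i, j, hp, rfl⟩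
    obtain ⟨h1, h2, h3⟩ := h l i j hp
    simp only [coe_image, Set.mem_image, mem_coe, mem_product, mem_range]
    exact ⟨(l, i, j), by simp; omega, rfl⟩
  · exact (Finset.image _ _).finite_toSet.bddAbove

lemma wsupFam_bdd (vf : ℕ → ℕ → ℕ → ℕ → ℝ) (k : ℕ) (P : ℕ → ℕ → ℕ → Prop) (N : ℕ)
    (h : ∀ l i j, P l i j → l ≤ N ∧ i ≤ N ∧ j ≤ N) :
    BddAbove {y : ℝ | ∃ jj l i m, 1 ≤ jj ∧ jj ≤ k ∧ P l i m ∧ y = |vf jj l i m|} := by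
  apply BddAbove.mono (t := ↑((range (k+1) ×ˢ range (N+1) ×ˢ range (N+1) ×ˢ range (N+1)).image
    (fun p : ℕ × ℕ × ℕ × ℕ => |vf p.1 p.2.1 p.2.2.1 p.2.2.2|)))
  · rintro y ⟨jj, l, i, m, hj1, hj2, hp, rfl⟩
    obtain ⟨h1, h2, h3⟩ := h l i m hp
    simp only [coe_image, Set.mem_image, mem_coe, mem_product, mem_range]
    exact ⟨(jj, l, i, m), by simp; omega, rfl⟩
  · exact (Finset.image _ _).finite_toSet.bddAbove

noncomputable def mergedV (k r rb Lb : ℕ) (v₀ : ℕ → ℕ → ℕ → ℝ) (vf : ℕ → ℕ → ℕ → ℕ → ℝ)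
    (d : ℕ) : ℕ → ℕ → ℕ → ℝ := fun l i j =>
  if l < Lb then
    if 1 ≤ i ∧ i ≤ k * rb ∧ (j = 0 ∨ (1 ≤ j ∧
        (if l = 0 then j ≤ d else ((j - 1) / rb = (i - 1) / rb ∧ j ≤ k * rb)))) then
      vf ((i - 1) / rb + 1) l ((i - 1) % rb + 1)
        (if j = 0 then 0 else if l = 0 then j else (j - 1) % rb + 1)
    else 0
  else if l = Lb then
    if 1 ≤ i ∧ i ≤ r then
      if j = 0 then v₀ 0 i 0 + ∑ jj ∈ Finset.Icc 1 k, v₀ 0 i jj * vf jj Lb 1 0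
      else if j ≤ k * rb then v₀ 0 i ((j - 1) / rb + 1) * vf ((j - 1) / rb + 1) Lb 1 ((j - 1) % rb + 1)
      else 0
    else 0
  else
    if 1 ≤ i ∧ i ≤ r ∧ j ≤ r then v₀ (l - Lb) i j else 0

section values
variable {k r rb Lb d : ℕ} {v₀ : ℕ → ℕ → ℕ → ℝ} {vf : ℕ → ℕ → ℕ → ℕ → ℝ}

lemma mv1 {l i : ℕ} (h : l < Lb) (h1 : 1 ≤ i) (h2 : i ≤ k * rb) :
    mergedV k r rb Lb v₀ vf d l i 0 = vf ((i-1)/rb + 1) l ((i-1)%rb + 1) 0 := by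
  unfold mergedV
  rw [if_pos h, if_pos ⟨h1, h2, Or.inl rfl⟩, if_pos rfl]

lemma mv2 {i j : ℕ} (h : 0 < Lb) (h1 : 1 ≤ i) (h2 : i ≤ k * rb) (h3 : 1 ≤ j) (h4 : j ≤ d) :
    mergedV k r rb Lb v₀ vf d 0 i j = vf ((i-1)/rb + 1) 0 ((i-1)%rb + 1) j := by
  unfold mergedV
  rw [if_pos h, if_pos ⟨h1, h2, Or.inr ⟨h3, by rw [if_pos rfl]; exact h4⟩⟩,
    if_neg (by omega), if_pos rfl]

lemma mv3 {l i j : ℕ} (h : l < Lb) (h0 : l ≠ 0) (h1 : 1 ≤ i) (h2 : i ≤ k * rb)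
    (h3 : 1 ≤ j) (h4 : (j-1)/rb = (i-1)/rb) (h5 : j ≤ k * rb) :
    mergedV k r rb Lb v₀ vf d l i j = vf ((i-1)/rb + 1) l ((i-1)%rb + 1) ((j-1)%rb + 1) := by
  unfold mergedV
  rw [if_pos h, if_pos ⟨h1, h2, Or.inr ⟨h3, by rw [if_neg h0]; exact ⟨h4, h5⟩⟩⟩,
    if_neg (by omega), if_neg h0]

lemma mv4 {l i j : ℕ} (h : l < Lb) (hi : i = 0 ∨ k * rb < i) :
    mergedV k r rb Lb v₀ vf d l i j = 0 := by
  unfold mergedV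
  rw [if_pos h, if_neg (by omega)]

lemma mv5 {l i j : ℕ} (h : l < Lb) (h0 : l ≠ 0) (h3 : 1 ≤ j)
    (hj : (j-1)/rb ≠ (i-1)/rb ∨ k * rb < j) :
    mergedV k r rb Lb v₀ vf d l i j = 0 := by
  unfold mergedV
  rw [if_pos h, if_neg]
  rintro ⟨-, -, hor⟩
  rcases hor with h' | ⟨-, h'⟩
  · omega
  · rw [if_neg h0] at h'
    rcases hj with hj | hj
    · exact hj h'.1
    · omega

lemma mv6 {i : ℕ} (h1 : 1 ≤ i) (h2 : i ≤ r) :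
    mergedV k r rb Lb v₀ vf d Lb i 0
      = v₀ 0 i 0 + ∑ jj ∈ Finset.Icc 1 k, v₀ 0 i jj * vf jj Lb 1 0 := by
  unfold mergedV
  rw [if_neg (by omega), if_pos rfl, if_pos ⟨h1, h2⟩, if_pos rfl]

lemma mv7 {i j : ℕ} (h1 : 1 ≤ i) (h2 : i ≤ r) (h3 : 1 ≤ j) (h4 : j ≤ k * rb) :
    mergedV k r rb Lb v₀ vf d Lb i j
      = v₀ 0 i ((j-1)/rb + 1) * vf ((j-1)/rb + 1) Lb 1 ((j-1)%rb + 1) := by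
  unfold mergedV
  rw [if_neg (by omega), if_pos rfl, if_pos ⟨h1, h2⟩, if_neg (by omega), if_pos h4]

lemma mv8 {i j : ℕ} (hi : i = 0 ∨ r < i) :
    mergedV k r rb Lb v₀ vf d Lb i j = 0 := by
  unfold mergedV
  rw [if_neg (by omega), if_pos rfl, if_neg (by omega)]

lemma mv8' {i j : ℕ} (hj : k * rb < j) :
    mergedV k r rb Lb v₀ vf d Lb i j = 0 := by
  unfold mergedV
  rw [if_neg (by omega), if_pos rfl]
  split_ifs <;> first | rfl | (exfalso; omega)

lemma mv9 {l i j : ℕ} (h : Lb < l) (h1 : 1 ≤ i) (h2 : i ≤ r) (h3 : j ≤ r) :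
    mergedV k r rb Lb v₀ vf d l i j = v₀ (l - Lb) i j := by
  unfold mergedV
  rw [if_neg (by omega), if_neg (by omega), if_pos ⟨h1, h2, h3⟩]

lemma mv10 {l i j : ℕ} (h : Lb < l) (hij : i = 0 ∨ r < i ∨ r < j) :
    mergedV k r rb Lb v₀ vf d l i j = 0 := by
  unfold mergedV
  rw [if_neg (by omega), if_neg (by omega), if_neg (by omega)]
end values


lemma fnnNeuron_succ (d r : ℕ) (v : ℕ → ℕ → ℕ → ℝ) (x : ℕ → ℝ) (l i : ℕ) :
    fnnNeuron d r v x (l+1) i = max 0 (v l i 0 +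
      ∑ j ∈ Finset.Icc 1 (if l = 0 then d else r), v l i j * fnnNeuron d r v x l j) := rfl

lemma copy_neuron (k r rb Lb d : ℕ) (hrb : 0 < rb)
    (v₀ : ℕ → ℕ → ℕ → ℝ) (vf : ℕ → ℕ → ℕ → ℕ → ℝ) (x : ℕ → ℝ) :
    ∀ l, l < Lb → ∀ i, 1 ≤ i →
      fnnNeuron d (max (k*rb) r) (mergedV k r rb Lb v₀ vf d) x (l+1) i
        = (if i ≤ k*rb then fnnNeuron d rb (vf ((i-1)/rb + 1)) x (l+1) ((i-1)%rb + 1) else 0) := by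
  intro l
  induction l with
  | zero =>
      intro hlt i hi
      rw [fnnNeuron_succ, fnnNeuron_succ, if_pos rfl, if_pos rfl]
      by_cases hik : i ≤ k * rb
      · rw [if_pos hik, mv1 hlt hi hik]
        congr 2
        apply Finset.sum_congr rfl
        intro j hj
        rw [mem_Icc] at hj
        rw [mv2 hlt hi hik hj.1 hj.2]
        rfl
      · rw [if_neg hik, mv4 hlt (by omega)]
        have : ∀ j ∈ Icc 1 d, mergedV k r rb Lb v₀ vf d 0 i j * fnnNeuron d (max (k*rb) r)
            (mergedV k r rb Lb v₀ vf d) x 0 j = 0 := by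
          intro j _
          rw [mv4 hlt (by omega), zero_mul]
        rw [Finset.sum_congr rfl this]
        simp
  | succ l ih =>
      intro hlt i hi
      have hl : l < Lb := by omega
      by_cases hik : i ≤ k * rb
      · rw [if_pos hik]
        obtain ⟨hb1, hb2, hx1, hx2, hsum⟩ := blk_mem hrb hi hik
        set jj := (i-1)/rb + 1 with hjj
        set c := (jj - 1) * rb with hc
        have hcrb : c + rb = jj * rb := by
          rw [hc, Nat.sub_one_mul]
          have := Nat.le_mul_of_pos_left rb (show 0 < jj by omega)
          omega
        have hckrb : c + rb ≤ k * rb := by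
          rw [hcrb]; exact Nat.mul_le_mul_right rb hb2
        rw [fnnNeuron_succ, fnnNeuron_succ, if_neg (by omega), if_neg (by omega),
          mv1 hlt hi hik]
        congr 2
        -- sum over the block
        have hsub : Icc (c+1) (c+rb) ⊆ Icc 1 (max (k*rb) r) := by
          intro j hj
          rw [mem_Icc] at *
          constructor
          · omega
          · exact le_trans (le_trans hj.2 hckrb) (le_max_left _ _)
        have hzero : ∀ j ∈ Icc 1 (max (k*rb) r), j ∉ Icc (c+1) (c+rb) →
            mergedV k r rb Lb v₀ vf d (l+1) i j *
              fnnNeuron d (max (k*rb) r) (mergedV k r rb Lb v₀ vf d) x (l+1) j = 0 := by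
          intro j hj hj2
          rw [mem_Icc] at hj hj2
          have h1j : 1 ≤ j := hj.1
          by_cases hdiv' : (j-1)/rb = (i-1)/rb
          · rcases Nat.lt_or_ge (k*rb) j with h | h
            · rw [mv5 (show l+1 < Lb by omega) (by omega) h1j (Or.inr h), zero_mul]
            · exfalso
              have h2 : rb * ((j - 1) / rb) + (j - 1) % rb = j - 1 := Nat.div_add_mod _ _
              have h3 : (j - 1) % rb < rb := Nat.mod_lt _ hrb
              rw [hdiv'] at h2
              have h5 : (i-1)/rb = jj - 1 := by omega
              rw [h5] at h2
              have hc' : rb * (jj - 1) = c := by rw [hc, Nat.mul_comm]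
              omega
          · rw [mv5 (show l+1 < Lb by omega) (by omega) h1j (Or.inl hdiv'), zero_mul]
        rw [← Finset.sum_subset hsub hzero]
        have hmap : Icc (c+1) (c+rb) = Finset.map (addLeftEmbedding c) (Icc 1 rb) :=
          (Finset.map_add_left_Icc 1 rb c).symm
        rw [hmap, Finset.sum_map]
        apply Finset.sum_congr rfl
        intro m hm
        rw [mem_Icc] at hm
        have hemb : (addLeftEmbedding c) m = c + m := rfl
        rw [hemb]
        have hdm : (c + m - 1)/rb = jj - 1 ∧ (c + m - 1) % rb = m - 1 := by
          have := blkidx hrb hm.1 hm.2 (jj := jj)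
          rwa [← hc] at this
        have hdiv : (c + m - 1)/rb = (i-1)/rb := by omega
        have hle : c + m ≤ k * rb := by omega
        rw [mv3 (show l+1 < Lb by omega) (by omega) hi hik (by omega) hdiv hle]
        rw [ih hl (c+m) (by omega), if_pos hle]
        have e1 : (c + m - 1)/rb + 1 = jj := by omega
        have e2 : (c + m - 1) % rb + 1 = m := by omega
        rw [e1, e2, hjj]
      · rw [if_neg hik, fnnNeuron_succ, if_neg (by omega), mv4 hlt (by omega)]
        have : ∀ j ∈ Icc 1 (max (k*rb) r), mergedV k r rb Lb v₀ vf d (l+1) i j *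
            fnnNeuron d (max (k*rb) r) (mergedV k r rb Lb v₀ vf d) x (l+1) j = 0 := by
          intro j _
          rw [mv4 hlt (by omega), zero_mul]
        rw [Finset.sum_congr rfl this]
        simp


lemma top_neuron (k r rb Lb d : ℕ) (hrb : 0 < rb) (hLb : 0 < Lb)
    (v₀ : ℕ → ℕ → ℕ → ℝ) (vf : ℕ → ℕ → ℕ → ℕ → ℝ) (x : ℕ → ℝ) :
    ∀ l, ∀ i, 1 ≤ i →
      fnnNeuron d (max (k*rb) r) (mergedV k r rb Lb v₀ vf d) x (Lb + l + 1) i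
        = (if i ≤ r then
            fnnNeuron k r v₀ (fun j => fnnEval d rb Lb (vf j) x) (l+1) i else 0) := by
  set y : ℕ → ℝ := fun j => fnnEval d rb Lb (vf j) x with hy
  have hcopy : ∀ j, 1 ≤ j → fnnNeuron d (max (k*rb) r) (mergedV k r rb Lb v₀ vf d) x Lb j
      = (if j ≤ k*rb then fnnNeuron d rb (vf ((j-1)/rb+1)) x Lb ((j-1)%rb+1) else 0) := by
    intro j hj
    have h := copy_neuron k r rb Lb d hrb v₀ vf x (Lb-1) (by omega) j hj
    rwa [show Lb - 1 + 1 = Lb from by omega] at h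
  intro l
  induction l with
  | zero =>
      intro i hi
      by_cases hir : i ≤ r
      · rw [if_pos hir, show Lb + 0 + 1 = Lb + 1 from rfl, fnnNeuron_succ, fnnNeuron_succ,
          if_neg (show ¬ Lb = 0 by omega), if_pos (rfl : (0:ℕ) = 0), mv6 hi hir]
        have hyd : ∀ jj : ℕ, y jj - vf jj Lb 1 0
            = ∑ m ∈ Icc 1 rb, vf jj Lb 1 m * fnnNeuron d rb (vf jj) x Lb m := by
          intro jj
          simp only [hy, fnnEval]
          ring
        have hsum : ∑ j ∈ Icc 1 (max (k*rb) r), mergedV k r rb Lb v₀ vf d Lb i j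
              * fnnNeuron d (max (k*rb) r) (mergedV k r rb Lb v₀ vf d) x Lb j
            = ∑ jj ∈ Icc 1 k, v₀ 0 i jj * (y jj - vf jj Lb 1 0) := by
          have hsub : Icc 1 (k*rb) ⊆ Icc 1 (max (k*rb) r) := by
            intro j hj; rw [mem_Icc] at *
            exact ⟨hj.1, le_trans hj.2 (le_max_left _ _)⟩
          have hz : ∀ j ∈ Icc 1 (max (k*rb) r), j ∉ Icc 1 (k*rb) →
              mergedV k r rb Lb v₀ vf d Lb i j
                * fnnNeuron d (max (k*rb) r) (mergedV k r rb Lb v₀ vf d) x Lb j = 0 := by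
            intro j hj hj2
            rw [mem_Icc] at hj hj2
            rw [mv8' (by omega), zero_mul]
          rw [← Finset.sum_subset hsub hz, sum_blocks]
          apply Finset.sum_congr rfl
          intro jj hjj
          rw [mem_Icc] at hjj
          rw [hyd jj, Finset.mul_sum]
          apply Finset.sum_congr rfl
          intro m hm
          rw [mem_Icc] at hm
          have hdm := blkidx hrb hm.1 hm.2 (jj := jj)
          have hj1 : 1 ≤ (jj-1)*rb + m := by omega
          have hle : (jj-1)*rb + m ≤ k * rb := by
            have h1 : (jj-1)*rb + m ≤ (jj-1)*rb + rb := by omega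
            have h2 : (jj-1)*rb + rb = jj * rb := by
              rw [Nat.sub_one_mul]
              have := Nat.le_mul_of_pos_left rb (show 0 < jj by omega)
              omega
            have h3 : jj * rb ≤ k * rb := Nat.mul_le_mul_right rb hjj.2
            omega
          rw [mv7 hi hir hj1 hle, hcopy _ hj1, if_pos hle, hdm.1, hdm.2,
            show jj - 1 + 1 = jj from by omega, show m - 1 + 1 = m from by omega]
          ring
        have hcomb : ∀ jj ∈ Icc 1 k, v₀ 0 i jj * vf jj Lb 1 0
            + v₀ 0 i jj * (y jj - vf jj Lb 1 0) = v₀ 0 i jj * y jj := by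
          intro jj _; ring
        rw [hsum, add_assoc, ← Finset.sum_add_distrib, Finset.sum_congr rfl hcomb]
        rfl
      · rw [if_neg hir, show Lb + 0 + 1 = Lb + 1 from rfl, fnnNeuron_succ,
          if_neg (show ¬ Lb = 0 by omega), mv8 (by omega)]
        have hz : ∀ j ∈ Icc 1 (max (k*rb) r), mergedV k r rb Lb v₀ vf d Lb i j
            * fnnNeuron d (max (k*rb) r) (mergedV k r rb Lb v₀ vf d) x Lb j = 0 := by
          intro j _
          rw [mv8 (by omega), zero_mul]
        rw [Finset.sum_eq_zero hz]
        simp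
  | succ l ih =>
      intro i hi
      by_cases hir : i ≤ r
      · rw [if_pos hir, show Lb + (l+1) + 1 = (Lb + l + 1) + 1 from rfl, fnnNeuron_succ,
          fnnNeuron_succ, if_neg (show ¬ Lb + l + 1 = 0 by omega),
          if_neg (show ¬ l + 1 = 0 by omega), mv9 (by omega) hi hir (by omega),
          show Lb + l + 1 - Lb = l + 1 from by omega]
        congr 2
        have hsub : Icc 1 r ⊆ Icc 1 (max (k*rb) r) := by
          intro j hj; rw [mem_Icc] at *
          exact ⟨hj.1, le_trans hj.2 (le_max_right _ _)⟩
        have hz : ∀ j ∈ Icc 1 (max (k*rb) r), j ∉ Icc 1 r →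
            mergedV k r rb Lb v₀ vf d (Lb + l + 1) i j
              * fnnNeuron d (max (k*rb) r) (mergedV k r rb Lb v₀ vf d) x (Lb + l + 1) j = 0 := by
          intro j hj hj2
          rw [mem_Icc] at hj hj2
          rw [mv10 (by omega) (by omega), zero_mul]
        rw [← Finset.sum_subset hsub hz]
        apply Finset.sum_congr rfl
        intro j hj
        rw [mem_Icc] at hj
        rw [mv9 (by omega) hi hir hj.2, show Lb + l + 1 - Lb = l + 1 from by omega,
          ih j hj.1, if_pos hj.2]
      · rw [if_neg hir, show Lb + (l+1) + 1 = (Lb + l + 1) + 1 from rfl, fnnNeuron_succ,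
          if_neg (show ¬ Lb + l + 1 = 0 by omega), mv10 (by omega) (by omega)]
        have hz : ∀ j ∈ Icc 1 (max (k*rb) r), mergedV k r rb Lb v₀ vf d (Lb + l + 1) i j
            * fnnNeuron d (max (k*rb) r) (mergedV k r rb Lb v₀ vf d) x (Lb + l + 1) j = 0 := by
          intro j _
          rw [mv10 (by omega) (by omega), zero_mul]
        rw [Finset.sum_eq_zero hz]
        simp

lemma merged_eval (k r rb Lb d L : ℕ) (hrb : 0 < rb) (hLb : 0 < Lb) (hL : 0 < L) (hr : 0 < r)
    (v₀ : ℕ → ℕ → ℕ → ℝ) (vf : ℕ → ℕ → ℕ → ℕ → ℝ) (x : ℕ → ℝ) :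
    fnnEval d (max (k*rb) r) (L + Lb) (mergedV k r rb Lb v₀ vf d) x
      = fnnEval k r L v₀ (fun j => fnnEval d rb Lb (vf j) x) := by
  set y : ℕ → ℝ := fun j => fnnEval d rb Lb (vf j) x with hy
  have htop : ∀ i, 1 ≤ i → fnnNeuron d (max (k*rb) r) (mergedV k r rb Lb v₀ vf d) x (L + Lb) i
      = (if i ≤ r then fnnNeuron k r v₀ y L i else 0) := by
    intro i hi
    have h := top_neuron k r rb Lb d hrb hLb v₀ vf x (L-1) i hi
    rwa [show Lb + (L-1) + 1 = L + Lb from by omega, show L - 1 + 1 = L from by omega] at h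
  simp only [fnnEval]
  rw [mv9 (by omega) (le_refl 1) hr (by omega), show L + Lb - Lb = L from by omega]
  congr 1
  have hsub : Icc 1 r ⊆ Icc 1 (max (k*rb) r) := by
    intro j hj; rw [mem_Icc] at *
    exact ⟨hj.1, le_trans hj.2 (le_max_right _ _)⟩
  have hz : ∀ j ∈ Icc 1 (max (k*rb) r), j ∉ Icc 1 r →
      mergedV k r rb Lb v₀ vf d (L + Lb) 1 j
        * fnnNeuron d (max (k*rb) r) (mergedV k r rb Lb v₀ vf d) x (L + Lb) j = 0 := by
    intro j hj hj2
    rw [mem_Icc] at hj hj2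
    rw [mv10 (by omega) (by omega), zero_mul]
  rw [← Finset.sum_subset hsub hz]
  apply Finset.sum_congr rfl
  intro j hj
  rw [mem_Icc] at hj
  rw [mv9 (by omega) (le_refl 1) hr hj.2, show L + Lb - Lb = L from by omega,
    htop j hj.1, if_pos hj.2]


lemma relw_le {d r L l i j : ℕ} (h : RelW d r L l i j) :
    l ≤ L ∧ i ≤ max r 1 ∧ j ≤ max d r := by
  rcases h with ⟨h1, h2, h3, h4⟩ | ⟨h1, h2, h3⟩
  · split_ifs at h4 <;> omega
  · split_ifs at h3 <;> omega

lemma wsup_nonneg (P : ℕ → ℕ → ℕ → Prop) (v : ℕ → ℕ → ℕ → ℝ) : 0 ≤ wsup P v :=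
  Real.sSup_nonneg (by rintro y ⟨l, i, j, -, rfl⟩; exact abs_nonneg _)

lemma wsupFam_nonneg (k : ℕ) (P : ℕ → ℕ → ℕ → Prop) (vf : ℕ → ℕ → ℕ → ℕ → ℝ) :
    0 ≤ wsupFam k P vf :=
  Real.sSup_nonneg (by rintro y ⟨jj, l, i, m, -, -, -, rfl⟩; exact abs_nonneg _)

lemma le_wsup {P : ℕ → ℕ → ℕ → Prop} {v : ℕ → ℕ → ℕ → ℝ} (N : ℕ)
    (hb : ∀ l i j, P l i j → l ≤ N ∧ i ≤ N ∧ j ≤ N)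
    {l i j : ℕ} (h : P l i j) : |v l i j| ≤ wsup P v :=
  le_csSup (wsup_bdd v P N hb) ⟨l, i, j, h, rfl⟩

lemma le_wsupFam {k : ℕ} {P : ℕ → ℕ → ℕ → Prop} {vf : ℕ → ℕ → ℕ → ℕ → ℝ} (N : ℕ)
    (hb : ∀ l i j, P l i j → l ≤ N ∧ i ≤ N ∧ j ≤ N)
    {jj l i m : ℕ} (hj1 : 1 ≤ jj) (hj2 : jj ≤ k) (h : P l i m) :
    |vf jj l i m| ≤ wsupFam k P vf :=
  le_csSup (wsupFam_bdd vf k P N hb) ⟨jj, l, i, m, hj1, hj2, h, rfl⟩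

section cases
variable {k r rb Lb d : ℕ} {v₀ : ℕ → ℕ → ℕ → ℝ} {vf : ℕ → ℕ → ℕ → ℕ → ℝ}

/-- case analysis for weights in the copied part -/
lemma mv_low_cases (hrb : 0 < rb) {l : ℕ} (h : l < Lb) (i m : ℕ) :
    mergedV k r rb Lb v₀ vf d l i m = 0 ∨
      ∃ jj ii w, 1 ≤ jj ∧ jj ≤ k ∧ RelW d rb Lb l ii w ∧
        mergedV k r rb Lb v₀ vf d l i m = vf jj l ii w := by
  unfold mergedV
  rw [if_pos h]
  by_cases hg : 1 ≤ i ∧ i ≤ k * rb ∧ (m = 0 ∨ (1 ≤ m ∧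
      (if l = 0 then m ≤ d else ((m - 1) / rb = (i - 1) / rb ∧ m ≤ k * rb))))
  · rw [if_pos hg]
    right
    obtain ⟨h1, h2, hOr⟩ := hg
    obtain ⟨hb1, hb2, hx1, hx2, -⟩ := blk_mem hrb h1 h2
    refine ⟨(i-1)/rb+1, (i-1)%rb+1, _, hb1, hb2, ?_, rfl⟩
    left
    refine ⟨h, hx1, hx2, ?_⟩
    rcases hOr with hm0 | ⟨hm1, hcond⟩
    · rw [if_pos hm0]
      exact Nat.zero_le _
    · rw [if_neg (by omega)]
      by_cases hl0 : l = 0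
      · rw [if_pos hl0] at hcond ⊢
        rw [if_pos hl0]
        exact hcond
      · rw [if_neg hl0] at hcond ⊢
        rw [if_neg hl0]
        have := Nat.mod_lt (m - 1) hrb
        omega
  · rw [if_neg hg]
    exact Or.inl rfl

/-- case analysis for weights in the merging layer, non-offset -/
lemma mv_mid_cases (hrb : 0 < rb) {m : ℕ} (hm : 1 ≤ m) (i : ℕ) :
    mergedV k r rb Lb v₀ vf d Lb i m = 0 ∨
      ∃ jj w, 1 ≤ jj ∧ jj ≤ k ∧ 1 ≤ w ∧ w ≤ rb ∧ 1 ≤ i ∧ i ≤ r ∧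
        mergedV k r rb Lb v₀ vf d Lb i m = v₀ 0 i jj * vf jj Lb 1 w := by
  by_cases hi : 1 ≤ i ∧ i ≤ r
  · by_cases hmk : m ≤ k * rb
    · right
      obtain ⟨hb1, hb2, hx1, hx2, -⟩ := blk_mem hrb hm hmk
      exact ⟨(m-1)/rb+1, (m-1)%rb+1, hb1, hb2, hx1, hx2, hi.1, hi.2,
        mv7 hi.1 hi.2 hm hmk⟩
    · exact Or.inl (mv8' (by omega))
  · exact Or.inl (mv8 (by omega))

/-- case analysis for weights in the top part -/
lemma mv_high_cases {L l i m : ℕ} (hL : 0 < L) (h : Lb < l)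
    (hrel : RelW d (max (k*rb) r) (L + Lb) l i m) :
    mergedV k r rb Lb v₀ vf d l i m = 0 ∨
      (RelW k r L (l - Lb) i m ∧
        mergedV k r rb Lb v₀ vf d l i m = v₀ (l - Lb) i m) := by
  by_cases hg : 1 ≤ i ∧ i ≤ r ∧ m ≤ r
  · right
    refine ⟨?_, mv9 h hg.1 hg.2.1 hg.2.2⟩
    rcases hrel with ⟨h1, h2, h3, h4⟩ | ⟨h1, h2, h3⟩
    · left
      exact ⟨by omega, hg.1, hg.2.1, by rw [if_neg (by omega)]; exact hg.2.2⟩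
    · right
      exact ⟨by omega, h2, by rw [if_neg (by omega)]; exact hg.2.2⟩
  · left
    unfold mergedV
    rw [if_neg (by omega), if_neg (by omega), if_neg hg]
end cases

/-- **Lemma (composition of networks and weight bounds)**: given `f₀ ∈ F(L, r)` with weight
vector `v₀` (input dimension `k`) and `f₁, …, f_k ∈ F(L̄, r̄)` with weight vectors
`vf 1, …, vf k` (input dimension `d`), the merged network `f₀(f₁, …, f_k)` has `L + L̄`
hidden layers and at most `max {k·r̄, r}` neurons per layer; its weight vector `v`
computes the composition and satisfies the bounds (a), and additionally (b) if none of
the `f_j` has an offset in its output layer, and (c) if moreover the non-offset weights of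
layer `0` of `f₀` or the non-offset output weights of the `f_j` are bounded by `1`. -/
theorem statement_16 (d k r rb L Lb : ℕ)
    (hd : 0 < d) (hk : 0 < k) (hr : 0 < r) (hrb : 0 < rb) (hL : 0 < L) (hLb : 0 < Lb)
    (v₀ : ℕ → ℕ → ℕ → ℝ) (vf : ℕ → ℕ → ℕ → ℕ → ℝ) :
    ∃ v : ℕ → ℕ → ℕ → ℝ,
      -- the merged network computes the composition `f₀ (f₁, …, f_k)`
      (∀ x : ℕ → ℝ,
        fnnEval d (max (k * rb) r) (L + Lb) v x
          = fnnEval k r L v₀ (fun j => fnnEval d rb Lb (vf j) x)) ∧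
      -- (a) general weight bound
      (∀ l i m, RelW d (max (k * rb) r) (L + Lb) l i m →
        |v l i m| ≤
          max (max (wsup (RelW k r L) v₀) (wsupFam k (RelW d rb Lb) vf))
            (wsup (fun l' i' j' => RelW k r L l' i' j' ∧ l' = 0) v₀ *
              ((k : ℝ) * wsupFam k (fun l' i' j' => RelW d rb Lb l' i' j' ∧ l' = Lb) vf + 1))) ∧
      -- (b) weight bound in the absence of output offsets of the `f_j`
      ((∀ jj ∈ Finset.Icc 1 k, vf jj Lb 1 0 = 0) →
        ∀ l i m, RelW d (max (k * rb) r) (L + Lb) l i m →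
          |v l i m| ≤
            max (max (wsup (RelW k r L) v₀) (wsupFam k (RelW d rb Lb) vf))
              (wsup (fun l' i' j' => RelW k r L l' i' j' ∧ l' = 0 ∧ 1 ≤ j') v₀ *
                wsupFam k (fun l' i' j' => RelW d rb Lb l' i' j' ∧ l' = Lb ∧ 1 ≤ j') vf)) ∧
      -- (c) weight bound when in addition one of the two factors is at most `1`
      ((∀ jj ∈ Finset.Icc 1 k, vf jj Lb 1 0 = 0) →
        (wsup (fun l' i' j' => RelW k r L l' i' j' ∧ l' = 0 ∧ 1 ≤ j') v₀ ≤ 1 ∨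
          wsupFam k (fun l' i' j' => RelW d rb Lb l' i' j' ∧ l' = Lb ∧ 1 ≤ j') vf ≤ 1) →
        ∀ l i m, RelW d (max (k * rb) r) (L + Lb) l i m →
          |v l i m| ≤ max (wsup (RelW k r L) v₀) (wsupFam k (RelW d rb Lb) vf)) := by
  -- abbreviations
  set A := wsup (RelW k r L) v₀ with hA
  set B := wsupFam k (RelW d rb Lb) vf with hB
  set A0 := wsup (fun l' i' j' => RelW k r L l' i' j' ∧ l' = 0) v₀ with hA0
  set B0 := wsupFam k (fun l' i' j' => RelW d rb Lb l' i' j' ∧ l' = Lb) vf with hB0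
  set A1 := wsup (fun l' i' j' => RelW k r L l' i' j' ∧ l' = 0 ∧ 1 ≤ j') v₀ with hA1
  set B1 := wsupFam k (fun l' i' j' => RelW d rb Lb l' i' j' ∧ l' = Lb ∧ 1 ≤ j') vf with hB1
  -- index bounds
  have hbA : ∀ l i j, RelW k r L l i j → l ≤ L+k+r+1 ∧ i ≤ L+k+r+1 ∧ j ≤ L+k+r+1 :=
    fun l i j h => by have := relw_le h; omega
  have hbA0 : ∀ l i j, (RelW k r L l i j ∧ l = 0) → l ≤ L+k+r+1 ∧ i ≤ L+k+r+1 ∧ j ≤ L+k+r+1 :=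
    fun l i j h => by have := relw_le h.1; omega
  have hbA1 : ∀ l i j, (RelW k r L l i j ∧ l = 0 ∧ 1 ≤ j) →
      l ≤ L+k+r+1 ∧ i ≤ L+k+r+1 ∧ j ≤ L+k+r+1 :=
    fun l i j h => by have := relw_le h.1; omega
  have hbB : ∀ l i j, RelW d rb Lb l i j → l ≤ Lb+d+rb+1 ∧ i ≤ Lb+d+rb+1 ∧ j ≤ Lb+d+rb+1 :=
    fun l i j h => by have := relw_le h; omega
  have hbB0 : ∀ l i j, (RelW d rb Lb l i j ∧ l = Lb) →
      l ≤ Lb+d+rb+1 ∧ i ≤ Lb+d+rb+1 ∧ j ≤ Lb+d+rb+1 :=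
    fun l i j h => by have := relw_le h.1; omega
  have hbB1 : ∀ l i j, (RelW d rb Lb l i j ∧ l = Lb ∧ 1 ≤ j) →
      l ≤ Lb+d+rb+1 ∧ i ≤ Lb+d+rb+1 ∧ j ≤ Lb+d+rb+1 :=
    fun l i j h => by have := relw_le h.1; omega
  -- sup inequalities
  have leA : ∀ {l i j}, RelW k r L l i j → |v₀ l i j| ≤ A :=
    fun h => le_wsup (L+k+r+1) hbA h
  have leA0 : ∀ {l i j}, (RelW k r L l i j ∧ l = 0) → |v₀ l i j| ≤ A0 :=
    fun h => le_wsup (L+k+r+1) hbA0 h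
  have leA1 : ∀ {l i j}, (RelW k r L l i j ∧ l = 0 ∧ 1 ≤ j) → |v₀ l i j| ≤ A1 :=
    fun h => le_wsup (L+k+r+1) hbA1 h
  have leB : ∀ {jj l i m}, 1 ≤ jj → jj ≤ k → RelW d rb Lb l i m → |vf jj l i m| ≤ B :=
    fun h1 h2 h => le_wsupFam (Lb+d+rb+1) hbB h1 h2 h
  have leB0 : ∀ {jj l i m}, 1 ≤ jj → jj ≤ k → (RelW d rb Lb l i m ∧ l = Lb) →
      |vf jj l i m| ≤ B0 := fun h1 h2 h => le_wsupFam (Lb+d+rb+1) hbB0 h1 h2 h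
  have leB1 : ∀ {jj l i m}, 1 ≤ jj → jj ≤ k → (RelW d rb Lb l i m ∧ l = Lb ∧ 1 ≤ m) →
      |vf jj l i m| ≤ B1 := fun h1 h2 h => le_wsupFam (Lb+d+rb+1) hbB1 h1 h2 h
  have nA : 0 ≤ A := wsup_nonneg _ _
  have nB : 0 ≤ B := wsupFam_nonneg _ _ _
  have nA0 : 0 ≤ A0 := wsup_nonneg _ _
  have nB0 : 0 ≤ B0 := wsupFam_nonneg _ _ _
  have nA1 : 0 ≤ A1 := wsup_nonneg _ _
  have nB1 : 0 ≤ B1 := wsupFam_nonneg _ _ _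
  have hkR : (1:ℝ) ≤ (k:ℝ) := by exact_mod_cast hk
  refine ⟨mergedV k r rb Lb v₀ vf d,
    fun x => merged_eval k r rb Lb d L hrb hLb hL hr v₀ vf x, ?_, ?_, ?_⟩
  · -- (a)
    intro l i m hrel
    have h0R : (0:ℝ) ≤ max (max A B) (A0 * (↑k * B0 + 1)) :=
      le_trans nA (le_trans (le_max_left A B) (le_max_left _ _))
    rcases Nat.lt_trichotomy l Lb with hl | hl | hl
    · rcases mv_low_cases hrb hl i m with h0 | ⟨jj, ii, w, hj1, hj2, hRW, heq⟩
      · rw [h0, abs_zero]; exact h0R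
      · rw [heq]
        exact le_trans (leB hj1 hj2 hRW) (le_trans (le_max_right A B) (le_max_left _ _))
    · subst hl
      by_cases hm : m = 0
      · subst hm
        by_cases hi : 1 ≤ i ∧ i ≤ r
        · rw [mv6 hi.1 hi.2]
          have t1 : |v₀ 0 i 0| ≤ A0 :=
            leA0 ⟨Or.inl ⟨hL, hi.1, hi.2, Nat.zero_le _⟩, rfl⟩
          have t2 : |∑ jj ∈ Icc 1 k, v₀ 0 i jj * vf jj l 1 0| ≤ (k:ℝ) * (A0 * B0) := by
            refine le_trans (Finset.abs_sum_le_sum_abs _ _) ?_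
            have : ∀ jj ∈ Icc 1 k, |v₀ 0 i jj * vf jj l 1 0| ≤ A0 * B0 := by
              intro jj hjj
              rw [mem_Icc] at hjj
              rw [abs_mul]
              refine mul_le_mul
                (leA0 ⟨Or.inl ⟨hL, hi.1, hi.2, by simpa using hjj.2⟩, rfl⟩)
                (leB0 hjj.1 hjj.2 ⟨Or.inr ⟨rfl, rfl, Nat.zero_le _⟩, rfl⟩)
                (abs_nonneg _) nA0
            refine le_trans (Finset.sum_le_sum this) ?_
            rw [Finset.sum_const, Nat.card_Icc]
            simp
          refine le_trans (le_trans (abs_add_le _ _) ?_) (le_max_right _ _)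
          calc |v₀ 0 i 0| + |∑ jj ∈ Icc 1 k, v₀ 0 i jj * vf jj l 1 0|
              ≤ A0 + (k:ℝ) * (A0 * B0) := add_le_add t1 t2
            _ = A0 * ((k:ℝ) * B0 + 1) := by ring
        · rw [mv8 (by omega), abs_zero]; exact h0R
      · rcases mv_mid_cases hrb (show 1 ≤ m by omega) i with
          h0 | ⟨jj, w, hj1, hj2, hw1, hw2, hi1, hi2, heq⟩
        · rw [h0, abs_zero]; exact h0R
        · rw [heq, abs_mul]
          have t1 : |v₀ 0 i jj| ≤ A0 :=
            leA0 ⟨Or.inl ⟨hL, hi1, hi2, by simpa using hj2⟩, rfl⟩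
          have t2 : |vf jj l 1 w| ≤ B0 :=
            leB0 hj1 hj2 ⟨Or.inr ⟨rfl, rfl, by rw [if_neg (by omega)]; exact hw2⟩, rfl⟩
          refine le_trans ?_ (le_max_right _ _)
          calc |v₀ 0 i jj| * |vf jj l 1 w| ≤ A0 * B0 :=
              mul_le_mul t1 t2 (abs_nonneg _) nA0
            _ ≤ A0 * ((k:ℝ) * B0 + 1) := by
                have h2 : B0 ≤ (k:ℝ) * B0 + 1 := by
                  have := mul_le_mul_of_nonneg_right hkR nB0
                  linarith
                exact mul_le_mul_of_nonneg_left h2 nA0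
    · rcases mv_high_cases hL hl hrel with h0 | ⟨hRW, heq⟩
      · rw [h0, abs_zero]; exact h0R
      · rw [heq]
        exact le_trans (leA hRW) (le_trans (le_max_left A B) (le_max_left _ _))
  · -- (b)
    intro hoff l i m hrel
    have h0R : (0:ℝ) ≤ max (max A B) (A1 * B1) :=
      le_trans nA (le_trans (le_max_left A B) (le_max_left _ _))
    rcases Nat.lt_trichotomy l Lb with hl | hl | hl
    · rcases mv_low_cases hrb hl i m with h0 | ⟨jj, ii, w, hj1, hj2, hRW, heq⟩
      · rw [h0, abs_zero]; exact h0R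
      · rw [heq]
        exact le_trans (leB hj1 hj2 hRW) (le_trans (le_max_right A B) (le_max_left _ _))
    · subst hl
      by_cases hm : m = 0
      · subst hm
        by_cases hi : 1 ≤ i ∧ i ≤ r
        · rw [mv6 hi.1 hi.2, Finset.sum_eq_zero
            (fun jj hjj => by rw [hoff jj hjj, mul_zero]), add_zero]
          exact le_trans (leA (Or.inl ⟨hL, hi.1, hi.2, Nat.zero_le _⟩))
            (le_trans (le_max_left A B) (le_max_left _ _))
        · rw [mv8 (by omega), abs_zero]; exact h0R
      · rcases mv_mid_cases hrb (show 1 ≤ m by omega) i with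
          h0 | ⟨jj, w, hj1, hj2, hw1, hw2, hi1, hi2, heq⟩
        · rw [h0, abs_zero]; exact h0R
        · rw [heq, abs_mul]
          have t1 : |v₀ 0 i jj| ≤ A1 :=
            leA1 ⟨Or.inl ⟨hL, hi1, hi2, by simpa using hj2⟩, rfl, hj1⟩
          have t2 : |vf jj l 1 w| ≤ B1 :=
            leB1 hj1 hj2 ⟨Or.inr ⟨rfl, rfl, by rw [if_neg (by omega)]; exact hw2⟩, rfl, hw1⟩
          exact le_trans (mul_le_mul t1 t2 (abs_nonneg _) nA1) (le_max_right _ _)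
    · rcases mv_high_cases hL hl hrel with h0 | ⟨hRW, heq⟩
      · rw [h0, abs_zero]; exact h0R
      · rw [heq]
        exact le_trans (leA hRW) (le_trans (le_max_left A B) (le_max_left _ _))
  · -- (c)
    intro hoff hone l i m hrel
    have h0R : (0:ℝ) ≤ max A B := le_trans nA (le_max_left A B)
    rcases Nat.lt_trichotomy l Lb with hl | hl | hl
    · rcases mv_low_cases hrb hl i m with h0 | ⟨jj, ii, w, hj1, hj2, hRW, heq⟩
      · rw [h0, abs_zero]; exact h0R
      · rw [heq]
        exact le_trans (leB hj1 hj2 hRW) (le_max_right A B)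
    · subst hl
      by_cases hm : m = 0
      · subst hm
        by_cases hi : 1 ≤ i ∧ i ≤ r
        · rw [mv6 hi.1 hi.2, Finset.sum_eq_zero
            (fun jj hjj => by rw [hoff jj hjj, mul_zero]), add_zero]
          exact le_trans (leA (Or.inl ⟨hL, hi.1, hi.2, Nat.zero_le _⟩)) (le_max_left A B)
        · rw [mv8 (by omega), abs_zero]; exact h0R
      · rcases mv_mid_cases hrb (show 1 ≤ m by omega) i with
          h0 | ⟨jj, w, hj1, hj2, hw1, hw2, hi1, hi2, heq⟩
        · rw [h0, abs_zero]; exact h0R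
        · rw [heq, abs_mul]
          rcases hone with h1 | h1
          · have t1 : |v₀ 0 i jj| ≤ 1 :=
              le_trans (leA1 ⟨Or.inl ⟨hL, hi1, hi2, by simpa using hj2⟩, rfl, hj1⟩) h1
            have t2 : |vf jj l 1 w| ≤ B :=
              leB hj1 hj2 (Or.inr ⟨rfl, rfl, by rw [if_neg (by omega)]; exact hw2⟩)
            calc |v₀ 0 i jj| * |vf jj l 1 w| ≤ 1 * B :=
                mul_le_mul t1 t2 (abs_nonneg _) zero_le_one
              _ = B := one_mul B
              _ ≤ max A B := le_max_right A B
          · have t1 : |v₀ 0 i jj| ≤ A :=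
              leA (Or.inl ⟨hL, hi1, hi2, by simpa using hj2⟩)
            have t2 : |vf jj l 1 w| ≤ 1 :=
              le_trans (leB1 hj1 hj2
                ⟨Or.inr ⟨rfl, rfl, by rw [if_neg (by omega)]; exact hw2⟩, rfl, hw1⟩) h1
            calc |v₀ 0 i jj| * |vf jj l 1 w| ≤ A * 1 :=
                mul_le_mul t1 t2 (abs_nonneg _) nA
              _ = A := mul_one A
              _ ≤ max A B := le_max_left A B
    · rcases mv_high_cases hL hl hrel with h0 | ⟨hRW, heq⟩
      · rw [h0, abs_zero]; exact h0R
      · rw [heq]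
        exact le_trans (leA hRW) (le_max_left A B)
end
end

section
/- Let σ: ℝ → ℝ be the ReLU activation σ(x) = max{x,0}. Then for any R ∈ ℕ and any a ≥ 1 there exists a feedforward ReLU network f̂_{mult} ∈ F(R,18) whose weights satisfy ‖v_{f̂_{mult}}‖_∞ ≤ 4·a², (v_{f̂_{mult}})^{(R)}_{1,0} = 0 (no offset in the output layer), and ‖(v_{f̂_{mult}})^{(0)}‖_∞ ≤ 1, such that |f̂_{mult}(x,y) − x·y| ≤ 2·a²·4^{−R} for all x,y ∈ [−a,a]. -/
open Finset

noncomputable section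

/-!
Yarotsky's construction. With the tent map `g = tent`, the identity
`t - t² = (g t + (g t - (g t)²)) / 4` iterates to `f_m t - t² = (s - s²) / 4^m` for
`f_m = sqApprox m` and `s = g^[m] t`; on `[0,1]` this error lies in
`[0, 4^{-(m+1)}]`. Since `g s = 2s - 4 relu(s - 1/2)` for every `s`, one ReLU layer maps the
three neurons `(f_n t, g^[n] t, relu(g^[n] t - 1/2))` to the same triple for `n + 1`, and the
output layer reads off `f_R t`. The network runs four such channels, on
`t = 1/2 ± (x ± y)/(4a) ∈ [0,1]`, and by polarization `x y = 2a² (t₊₊² + t₋₊² - t₊₋² - t₋₋²)`,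
so the output is within `2a² · 2 · 4^{-(R+1)} ≤ 2a² 4^{-R}` of `x y`.
-/

def tent (t : ℝ) : ℝ := min (2 * t) (2 - 2 * t)

lemma tent_mem_Icc {t : ℝ} (ht : t ∈ Set.Icc (0 : ℝ) 1) : tent t ∈ Set.Icc (0 : ℝ) 1 := by
  obtain ⟨h0, h1⟩ := ht
  constructor
  · exact le_min (by linarith) (by linarith)
  · rcases le_total t (1 / 2) with h | h
    · exact min_le_of_left_le (by linarith)
    · exact min_le_of_right_le (by linarith)

lemma iterate_tent_mem_Icc {t : ℝ} (ht : t ∈ Set.Icc (0 : ℝ) 1) (n : ℕ) :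
    tent^[n] t ∈ Set.Icc (0 : ℝ) 1 := by
  induction n with
  | zero => exact ht
  | succ n ih => rw [Function.iterate_succ_apply']; exact tent_mem_Icc ih

lemma two_mul_sub_four_mul_max (t : ℝ) : 2 * t - 4 * max 0 (t - 1 / 2) = tent t := by
  rcases le_total t (1 / 2) with h | h
  · rw [max_eq_left (by linarith), tent, min_eq_left (by linarith)]; ring
  · rw [max_eq_right (by linarith), tent, min_eq_right (by linarith)]; ring

lemma sub_sq_eq_tent (t : ℝ) : t - t ^ 2 = (tent t + (tent t - tent t ^ 2)) / 4 := by
  rcases le_total t (1 / 2) with h | h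
  · rw [tent, min_eq_left (by linarith)]; ring
  · rw [tent, min_eq_right (by linarith)]; ring

def sqApprox (m : ℕ) (t : ℝ) : ℝ := t - ∑ k ∈ Icc 1 m, tent^[k] t / 4 ^ k

lemma sqApprox_zero (t : ℝ) : sqApprox 0 t = t := by simp [sqApprox]

lemma sqApprox_succ (m : ℕ) (t : ℝ) :
    sqApprox (m + 1) t = sqApprox m t - tent^[m + 1] t / 4 ^ (m + 1) := by
  rw [sqApprox, sqApprox, sum_Icc_succ_top (by omega)]; ring

lemma sqApprox_sub_sq (m : ℕ) (t : ℝ) :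
    sqApprox m t - t ^ 2 = (tent^[m] t - (tent^[m] t) ^ 2) / 4 ^ m := by
  induction m with
  | zero => simp [sqApprox_zero]
  | succ m ih =>
    rw [sqApprox_succ, Function.iterate_succ_apply', sub_right_comm, ih,
      sub_sq_eq_tent (tent^[m] t)]
    ring

lemma sqApprox_sub_sq_mem_Icc {t : ℝ} (ht : t ∈ Set.Icc (0 : ℝ) 1) (m : ℕ) :
    sqApprox m t - t ^ 2 ∈ Set.Icc 0 (1 / 4 ^ (m + 1)) := by
  obtain ⟨h0, h1⟩ := iterate_tent_mem_Icc ht m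
  rw [sqApprox_sub_sq]
  constructor
  · exact div_nonneg (by nlinarith) (by positivity)
  · calc _ ≤ 1 / 4 / (4 : ℝ) ^ m :=
          div_le_div_of_nonneg_right (by nlinarith [sq_nonneg (tent^[m] t - 1 / 2)]) (by positivity)
      _ = 1 / 4 ^ (m + 1) := by ring

lemma sum_range_mul_eq_sum_sum {M : Type*} [AddCommMonoid M] (b m : ℕ) (F : ℕ → M) :
    ∑ j ∈ range (b * m), F j = ∑ c ∈ range m, ∑ k ∈ range b, F (b * c + k) := by
  induction m with
  | zero => simp
  | succ m ih => rw [mul_add_one, sum_range_add, ih, sum_range_succ]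

lemma sum_Icc_one_mul_eq_sum_fin {M : Type*} [AddCommMonoid M] (b m : ℕ) (F : ℕ → M) :
    ∑ j ∈ Icc 1 (b * m), F j = ∑ c : Fin m, ∑ k : Fin b, F (b * c + k + 1) := by
  rw [← Ico_add_one_right_eq_Icc, sum_Ico_eq_sum_range, Nat.add_sub_cancel,
    sum_range_mul_eq_sum_sum]
  simp only [← Fin.sum_univ_eq_sum_range, add_comm 1]

open scoped Matrix

def slotValue (n : ℕ) (t : ℝ) : Fin 3 → ℝ :=
  ![sqApprox n t, tent^[n] t, max 0 (tent^[n] t - 1 / 2)]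

def stepBias : Fin 3 → ℝ := ![0, 0, -(1 / 2)]

/-- Row 0 computes `sqApprox l t = sqApprox (l - 1) t - tent s / 4 ^ l` and rows 1, 2 compute
`tent s = 2 s - 4 relu (s - 1/2)` from `slotValue (l - 1) t`, where `s = tent^[l - 1] t`. -/
def stepMatrix (l : ℕ) : Matrix (Fin 3) (Fin 3) ℝ :=
  !![1, -(2 / 4 ^ l), 4 / 4 ^ l; 0, 2, -4; 0, 2, -4]

lemma stepMatrix_mulVec_slotValue (n : ℕ) (t : ℝ) :
    stepMatrix (n + 1) *ᵥ slotValue n t =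
      ![sqApprox (n + 1) t, tent^[n + 1] t, tent^[n + 1] t] := by
  rw [sqApprox_succ, Function.iterate_succ_apply', ← two_mul_sub_four_mul_max]
  ext k
  fin_cases k <;> simp [stepMatrix, slotValue, Matrix.mulVec, dotProduct, Fin.sum_univ_three] <;>
    ring

lemma max_stepBias_add_mulVec {t : ℝ} (ht : t ∈ Set.Icc (0 : ℝ) 1) (n : ℕ) (k : Fin 3) :
    max 0 (stepBias k + (stepMatrix (n + 1) *ᵥ slotValue n t) k) = slotValue (n + 1) t k := by
  rw [stepMatrix_mulVec_slotValue]
  fin_cases k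
  · simp [stepBias, slotValue]
    nlinarith [(sqApprox_sub_sq_mem_Icc ht (n + 1)).1]
  · simpa [stepBias, slotValue] using (iterate_tent_mem_Icc ht (n + 1)).1
  · simp [stepBias, slotValue]
    ring_nf

lemma abs_stepMatrix_le (l : ℕ) (k k' : Fin 3) : |stepMatrix l k k'| ≤ 4 := by
  have h : (4 : ℝ) / 4 ^ l ≤ 4 := div_le_self (by norm_num) (one_le_pow₀ (by norm_num))
  have h' : (2 : ℝ) / 4 ^ l ≤ 4 / 4 ^ l := by gcongr; norm_num
  fin_cases k <;> fin_cases k' <;> simp [stepMatrix, abs_div] <;> linarith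

lemma abs_stepMatrix_zero_le {l : ℕ} (hl : l ≠ 0) (k : Fin 3) : |stepMatrix l 0 k| ≤ 1 := by
  have h : (4 : ℝ) / 4 ^ l ≤ 1 :=
    (div_le_one (by positivity)).2 (le_self_pow₀ (by norm_num) hl)
  have h' : (2 : ℝ) / 4 ^ l ≤ 4 / 4 ^ l := by gcongr; norm_num
  fin_cases k <;> simp [stepMatrix, abs_div] <;> linarith

/-- Hidden neuron `3 c + k + 1` holds slot `k` of channel `c`; neurons `13, …, 18` only ever
meet zero weights in the next layer. -/
def neuronIndex (c : Fin 4) (k : Fin 3) : ℕ := 3 * c + k + 1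

def neuronChannel (i : ℕ) : Fin 4 := Fin.ofNat 4 ((i - 1) / 3)

def neuronSlot (i : ℕ) : Fin 3 := Fin.ofNat 3 (i - 1)

lemma neuronChannel_neuronIndex (c : Fin 4) (k : Fin 3) :
    neuronChannel (neuronIndex c k) = c := by
  ext; simp only [neuronChannel, neuronIndex, Fin.val_ofNat]; omega

lemma neuronSlot_neuronIndex (c : Fin 4) (k : Fin 3) : neuronSlot (neuronIndex c k) = k := by
  ext; simp only [neuronSlot, neuronIndex, Fin.val_ofNat]; omega

lemma neuronIndex_ne_zero (c : Fin 4) (k : Fin 3) : neuronIndex c k ≠ 0 := by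
  unfold neuronIndex; omega

lemma neuronIndex_le_twelve (c : Fin 4) (k : Fin 3) : neuronIndex c k ≤ 12 := by
  unfold neuronIndex; omega

lemma sum_Icc_one_eighteen_eq_sum_neuronIndex (F : ℕ → ℝ) (hF : ∀ j, 12 < j → F j = 0) :
    ∑ j ∈ Icc 1 18, F j = ∑ c : Fin 4, ∑ k : Fin 3, F (neuronIndex c k) := by
  rw [← sum_subset (Icc_subset_Icc_right (by norm_num : 12 ≤ 18))
    (fun j hj hj' => hF j (by simp only [mem_Icc] at hj hj'; omega))]
  exact sum_Icc_one_mul_eq_sum_fin 3 4 F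

def channelFlip : Fin 4 → ℝ := ![1, -1, 1, -1]

def channelSign : Fin 4 → ℝ := ![1, 1, -1, -1]

lemma abs_channelFlip (c : Fin 4) : |channelFlip c| = 1 := by
  fin_cases c <;> simp [channelFlip]

lemma abs_channelSign (c : Fin 4) : |channelSign c| = 1 := by
  fin_cases c <;> simp [channelSign]

def channelInput (a x y : ℝ) (c : Fin 4) : ℝ :=
  1 / 2 + channelFlip c * (x + channelSign c * y) / (4 * a)

lemma channelInput_mem_Icc {a x y : ℝ} (ha : 0 < a) (hx : |x| ≤ a) (hy : |y| ≤ a)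
    (c : Fin 4) : channelInput a x y c ∈ Set.Icc (0 : ℝ) 1 := by
  have hz : |channelFlip c * (x + channelSign c * y)| ≤ 2 * a := by
    rw [abs_mul, abs_channelFlip, one_mul]
    calc |x + channelSign c * y| ≤ |x| + |channelSign c * y| := abs_add_le _ _
      _ ≤ 2 * a := by rw [abs_mul, abs_channelSign, one_mul]; linarith
  rw [abs_le] at hz
  have h4a : 0 < 4 * a := by positivity
  constructor
  · have : -(1 / 2) ≤ channelFlip c * (x + channelSign c * y) / (4 * a) := by
      rw [le_div_iff₀ h4a]; linarith
    unfold channelInput; linarith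
  · have : channelFlip c * (x + channelSign c * y) / (4 * a) ≤ 1 / 2 := by
      rw [div_le_iff₀ h4a]; linarith
    unfold channelInput; linarith

lemma sum_channelSign_mul_channelInput_sq {a : ℝ} (ha : a ≠ 0) (x y : ℝ) :
    ∑ c, channelSign c * channelInput a x y c ^ 2 = x * y / (2 * a ^ 2) := by
  simp [Fin.sum_univ_four, channelSign, channelFlip, channelInput]
  field_simp
  ring

def inputBias : Fin 3 → ℝ := ![1 / 2, 1 / 2, 0]

def inputWeight (a : ℝ) (i j : ℕ) : ℝ :=
  if j = 0 then inputBias (neuronSlot i)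
  else if j = 1 then channelFlip (neuronChannel i) / (4 * a)
  else if j = 2 then channelFlip (neuronChannel i) * channelSign (neuronChannel i) / (4 * a)
  else 0

def hiddenWeight (l i j : ℕ) : ℝ :=
  if j = 0 then stepBias (neuronSlot i)
  else if j ≤ 12 ∧ neuronChannel j = neuronChannel i then
    stepMatrix l (neuronSlot i) (neuronSlot j)
  else 0

def outputWeight (R : ℕ) (a : ℝ) (j : ℕ) : ℝ :=
  if j ≠ 0 ∧ j ≤ 12 then
    2 * a ^ 2 * channelSign (neuronChannel j) * stepMatrix R 0 (neuronSlot j)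
  else 0

def multNet (R : ℕ) (a : ℝ) (l i j : ℕ) : ℝ :=
  if l = 0 then inputWeight a i j else if l < R then hiddenWeight l i j else outputWeight R a j

lemma fnnNeuron_multNet_one (R : ℕ) (a : ℝ) (X : ℕ → ℝ) (c : Fin 4) (k : Fin 3)
    (ht : 0 ≤ channelInput a (X 1) (X 2) c) :
    fnnNeuron 2 18 (multNet R a) X 1 (neuronIndex c k) =
      slotValue 0 (channelInput a (X 1) (X 2) c) k := by
  have hsum : ∀ F : ℕ → ℝ, ∑ j ∈ Icc 1 2, F j = F 1 + F 2 := fun F => by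
    rw [sum_Icc_succ_top (by norm_num), Icc_self, sum_singleton]
  have hlin : channelFlip c / (4 * a) * X 1 + channelFlip c * channelSign c / (4 * a) * X 2 =
      channelInput a (X 1) (X 2) c - 1 / 2 := by
    rw [channelInput]; ring
  simp only [fnnNeuron, if_true, hsum, multNet, inputWeight, neuronSlot_neuronIndex,
    neuronChannel_neuronIndex]
  fin_cases k <;> simp [slotValue, sqApprox_zero, inputBias, hlin, ht]

lemma sum_hiddenWeight_mul (l : ℕ) (N : ℕ → ℝ) (c : Fin 4) (k : Fin 3) :
    ∑ j ∈ Icc 1 18, hiddenWeight l (neuronIndex c k) j * N j =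
      (stepMatrix l *ᵥ fun k' => N (neuronIndex c k')) k := by
  rw [sum_Icc_one_eighteen_eq_sum_neuronIndex _ (fun j hj => by
    simp [hiddenWeight, show ¬ j ≤ 12 by omega, show j ≠ 0 by omega])]
  simp [hiddenWeight, neuronIndex_ne_zero, neuronIndex_le_twelve, neuronChannel_neuronIndex,
    neuronSlot_neuronIndex, Matrix.mulVec, dotProduct]

lemma fnnNeuron_multNet_succ {R n : ℕ} (hn : n + 1 < R) (a : ℝ) (X : ℕ → ℝ)
    {t : Fin 4 → ℝ} (ht : ∀ c, t c ∈ Set.Icc (0 : ℝ) 1)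
    (hN : ∀ c k, fnnNeuron 2 18 (multNet R a) X (n + 1) (neuronIndex c k) = slotValue n (t c) k)
    (c : Fin 4) (k : Fin 3) :
    fnnNeuron 2 18 (multNet R a) X (n + 2) (neuronIndex c k) = slotValue (n + 1) (t c) k := by
  have hW : multNet R a (n + 1) = hiddenWeight (n + 1) := by
    ext i j; simp [multNet, hn]
  rw [fnnNeuron, if_neg n.succ_ne_zero, hW, sum_hiddenWeight_mul]
  simp only [hN, hiddenWeight, if_true, neuronSlot_neuronIndex]
  exact max_stepBias_add_mulVec (ht c) n k

lemma fnnNeuron_multNet {R : ℕ} {a : ℝ} {X : ℕ → ℝ}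
    (ht : ∀ c, channelInput a (X 1) (X 2) c ∈ Set.Icc (0 : ℝ) 1) {n : ℕ} (hn : n < R)
    (c : Fin 4) (k : Fin 3) :
    fnnNeuron 2 18 (multNet R a) X (n + 1) (neuronIndex c k) =
      slotValue n (channelInput a (X 1) (X 2) c) k := by
  induction n generalizing c k with
  | zero => exact fnnNeuron_multNet_one R a X c k (ht c).1
  | succ n ih => exact fnnNeuron_multNet_succ hn a X ht (ih (by omega)) c k

lemma fnnEval_multNet {n : ℕ} {a : ℝ} {X : ℕ → ℝ} {t : Fin 4 → ℝ}
    (hN : ∀ c k,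
      fnnNeuron 2 18 (multNet (n + 1) a) X (n + 1) (neuronIndex c k) = slotValue n (t c) k) :
    fnnEval 2 18 (n + 1) (multNet (n + 1) a) X =
      2 * a ^ 2 * ∑ c, channelSign c * sqApprox (n + 1) (t c) := by
  have hW : multNet (n + 1) a (n + 1) 1 = outputWeight (n + 1) a := by
    ext j; simp [multNet]
  have hrow : ∀ c, ∑ k, stepMatrix (n + 1) 0 k * slotValue n (t c) k = sqApprox (n + 1) (t c) :=
    fun c => congrFun (stepMatrix_mulVec_slotValue n (t c)) 0
  rw [fnnEval, hW, sum_Icc_one_eighteen_eq_sum_neuronIndex _ (fun j hj => by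
    simp [outputWeight, show ¬ j ≤ 12 by omega])]
  simp [outputWeight, neuronIndex_ne_zero, neuronIndex_le_twelve, neuronChannel_neuronIndex,
    neuronSlot_neuronIndex, hN, mul_sum, mul_assoc, ← hrow]

lemma wsup_le {P : ℕ → ℕ → ℕ → Prop} {v : ℕ → ℕ → ℕ → ℝ} {B : ℝ} (hB : 0 ≤ B)
    (h : ∀ l i j, P l i j → |v l i j| ≤ B) : wsup P v ≤ B :=
  Real.sSup_le (by rintro _ ⟨l, i, j, hP, rfl⟩; exact h l i j hP) hB

lemma abs_inputWeight_le {a : ℝ} (ha : 1 ≤ 4 * a) (i j : ℕ) : |inputWeight a i j| ≤ 1 := by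
  have hflip : |channelFlip (neuronChannel i) / (4 * a)| ≤ 1 := by
    rw [abs_div, abs_channelFlip, abs_of_pos (by linarith), div_le_one (by linarith)]
    exact ha
  unfold inputWeight
  split_ifs
  · generalize neuronSlot i = k; fin_cases k <;> norm_num [inputBias]
  · exact hflip
  · rw [mul_div_right_comm, abs_mul, abs_channelSign, mul_one]; exact hflip
  · simp

lemma abs_hiddenWeight_le (l i j : ℕ) : |hiddenWeight l i j| ≤ 4 := by
  unfold hiddenWeight
  split_ifs
  · generalize neuronSlot i = k; fin_cases k <;> norm_num [stepBias]
  · exact abs_stepMatrix_le l _ _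
  · simp

lemma abs_outputWeight_le {R : ℕ} (hR : R ≠ 0) (a : ℝ) (j : ℕ) :
    |outputWeight R a j| ≤ 2 * a ^ 2 := by
  unfold outputWeight
  split_ifs
  · rw [abs_mul, abs_mul, abs_channelSign, abs_of_nonneg (by positivity), mul_one]
    exact mul_le_of_le_one_right (by positivity) (abs_stepMatrix_zero_le hR _)
  · rw [abs_zero]; positivity

lemma abs_multNet_le {R : ℕ} (hR : R ≠ 0) {a : ℝ} (ha : 1 ≤ a) (l i j : ℕ) :
    |multNet R a l i j| ≤ 4 * a ^ 2 := by
  have ha2 : 1 ≤ a ^ 2 := one_le_pow₀ ha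
  unfold multNet
  split_ifs
  · linarith [abs_inputWeight_le (by linarith) i j]
  · linarith [abs_hiddenWeight_le l i j]
  · linarith [abs_outputWeight_le hR a j]

lemma abs_two_mul_sq_mul_sum_sqApprox_channelInput_sub_mul_le {a x y : ℝ} (ha : 0 < a)
    (hx : |x| ≤ a) (hy : |y| ≤ a) (m : ℕ) :
    |2 * a ^ 2 * ∑ c, channelSign c * sqApprox m (channelInput a x y c) - x * y| ≤
      a ^ 2 / 4 ^ m := by
  have hxy : x * y = 2 * a ^ 2 * ∑ c, channelSign c * channelInput a x y c ^ 2 := by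
    rw [sum_channelSign_mul_channelInput_sq ha.ne']; field_simp
  have he := fun c => sqApprox_sub_sq_mem_Icc (channelInput_mem_Icc ha hx hy c) m
  have hsum :
      |∑ c, channelSign c * (sqApprox m (channelInput a x y c) - channelInput a x y c ^ 2)| ≤
        2 * (1 / 4 ^ (m + 1)) := by
    generalize (1 : ℝ) / 4 ^ (m + 1) = ε at he ⊢
    obtain ⟨h0, h0'⟩ := he 0
    obtain ⟨h1, h1'⟩ := he 1
    obtain ⟨h2, h2'⟩ := he 2
    obtain ⟨h3, h3'⟩ := he 3
    refine abs_le.2 ⟨?_, ?_⟩ <;> simp [Fin.sum_univ_four, channelSign] <;> linarith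
  rw [hxy, ← mul_sub, ← sum_sub_distrib, abs_mul, abs_of_pos (by positivity)]
  simp only [← mul_sub]
  calc 2 * a ^ 2 * _ ≤ 2 * a ^ 2 * (2 * (1 / 4 ^ (m + 1))) := by gcongr
    _ = a ^ 2 / 4 ^ m := by rw [pow_succ]; field_simp; ring

/-- **Lemma (approximation of multiplication)**: for any `R ∈ ℕ` and `a ≥ 1` there is a
ReLU network `f̂_mult ∈ F(R, 18)` with `‖v‖_∞ ≤ 4a²`, no offset in the output layer
(`v_{1,0}^{(R)} = 0`) and `‖v^{(0)}‖_∞ ≤ 1`, such that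
`|f̂_mult(x,y) - x·y| ≤ 2a² · 4^{-R}` for all `x, y ∈ [-a, a]`. -/
theorem statement_18 (R : ℕ) (hR : 0 < R) (a : ℝ) (ha : 1 ≤ a) :
    ∃ v : ℕ → ℕ → ℕ → ℝ,
      wsup (RelW 2 18 R) v ≤ 4 * a ^ 2 ∧
      v R 1 0 = 0 ∧
      wsup (fun l i j => RelW 2 18 R l i j ∧ l = 0) v ≤ 1 ∧
      ∀ x ∈ Set.Icc (-a) a, ∀ y ∈ Set.Icc (-a) a,
        |fnnEval 2 18 R v (fun j => if j = 1 then x else if j = 2 then y else 0) - x * y|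
          ≤ 2 * a ^ 2 * (4 : ℝ) ^ (-(R : ℤ)) := by
  obtain ⟨n, rfl⟩ := Nat.exists_eq_add_one_of_ne_zero hR.ne'
  have ha0 : 0 < a := by linarith
  refine ⟨multNet (n + 1) a, ?_, ?_, ?_, ?_⟩
  · exact wsup_le (by positivity) fun l i j _ => abs_multNet_le hR.ne' ha l i j
  · simp [multNet, outputWeight]
  · refine wsup_le zero_le_one fun l i j ⟨_, hl⟩ => ?_
    subst hl
    simpa [multNet] using abs_inputWeight_le (by linarith) i j
  · intro x hx y hy
    rw [Set.mem_Icc, ← abs_le] at hx hy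
    rw [fnnEval_multNet (fnnNeuron_multNet (by simpa using channelInput_mem_Icc ha0 hx hy)
      n.lt_add_one)]
    calc _ ≤ a ^ 2 / 4 ^ (n + 1) := by
          simpa using abs_two_mul_sq_mul_sum_sqApprox_channelInput_sub_mul_le ha0 hx hy (n + 1)
      _ ≤ 2 * a ^ 2 * (4 : ℝ) ^ (-((n + 1 : ℕ) : ℤ)) := by
        rw [zpow_neg, zpow_natCast, div_eq_mul_inv]
        exact mul_le_mul_of_nonneg_right (by nlinarith) (by positivity)
end
end
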